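/- arXiv:1610.00812 — 4 statements merged into one kernel-verified Lean document; each statement's English description precedes it below -/
import Mathlib

section
/- Let c be any Coxeter element of the Weyl group of type Cₙ acting on ℝⁿ, and for 1 ≤ i ≤ n let ω_i = e_1 + ⋯ + e_i denote the i-th fundamental weight. Then for each 1 ≤ i ≤ n, the least positive integer m such that cᵐ(ω_i) = −ω_i is m = n. -/
/-!
Type `Cₙ` Weyl group in its reflection representation on `ℝⁿ`:
for `1 ≤ i ≤ n-1` the simple reflection `s_i` swaps the coordinates `i` and `i+1`
(1-indexed), and `s_n` negates the last coordinate.  A Coxeter element is a composition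
`s_{τ(1)} ∘ ⋯ ∘ s_{τ(n)}` for a permutation `τ` of `{1, …, n}`.  The fundamental weights
are `ω_i = e_1 + ⋯ + e_i`.

STATEMENT: for each `1 ≤ i ≤ n`, the least positive integer `m` with `cᵐ(ω_i) = -ω_i`
is `m = n`.
-/

noncomputable section

/-- Negation of the `i`-th coordinate of `ℝⁿ`, as a linear map. -/
def negLin (n : ℕ) (i : Fin n) : (Fin n → ℝ) →ₗ[ℝ] (Fin n → ℝ) :=
  LinearMap.pi fun j => if j = i then -(LinearMap.proj j) else LinearMap.proj j

lemma negLin_comp (n : ℕ) (i : Fin n) : (negLin n i).comp (negLin n i) = LinearMap.id := by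
  ext v j
  by_cases h : j = i <;> simp [negLin, LinearMap.pi_apply, h]

/-- The simple reflection `s_i` (`1 ≤ i ≤ n`, 1-indexed) of the Weyl group of type `Cₙ`
acting on `ℝⁿ`: for `1 ≤ i ≤ n-1` it swaps the coordinates `i` and `i+1` (i.e. the 0-indexed
coordinates `i-1` and `i`), and `s_n` negates the last coordinate.  For `i` out of range it
is the identity. -/
def sC (n : ℕ) (i : ℕ) : (Fin n → ℝ) ≃ₗ[ℝ] (Fin n → ℝ) :=
  if h : 1 ≤ i ∧ i < n then
    LinearEquiv.funCongrLeft ℝ ℝ (Equiv.swap ⟨i - 1, by omega⟩ ⟨i, h.2⟩)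
  else if h2 : i = n ∧ 0 < n then
    LinearEquiv.ofLinear (negLin n ⟨n - 1, by omega⟩) (negLin n ⟨n - 1, by omega⟩)
      (negLin_comp n _) (negLin_comp n _)
  else LinearEquiv.refl ℝ _

/-- The fundamental weight `ω_{i+1} = e_1 + ⋯ + e_{i+1}` (for `i : Fin n`, 0-indexed):
its 0-indexed coordinates `0, …, i` equal `1` and the rest equal `0`. -/
def omegaC (n : ℕ) (i : Fin n) : Fin n → ℝ := fun j => if j ≤ i then 1 else 0

/-!
The Coxeter element `c` is a monomial map: its permutation part is the product of all the
adjacent transpositions `(i, i + 1)` in some order, which is an `n`-cycle because each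
transposition joins two different cycles of the product of the ones after it, and exactly one
of its signs is `-1`. Labelling the coordinates along that cycle, starting at the one that
picks up the sign, `c` becomes the negacyclic shift `f_a ↦ f_(a+1)`, `f_(n-1) ↦ -f_0`.
Hence `cⁿ = -1`. For `0 < m < n`, the coordinates of `cᵐ v = -v` read `v_(a-m) = -v_a` for
`a ≥ m` and `v_a = v_(a+n-m)` for `a < m`; for `v ≥ 0` the first kills `v_a` when `a ≥ m` and
the second propagates zeros downwards, so `v = 0`, which `ω_i` is not.
-/

open Equiv Function

namespace Equiv.Perm

variable {α : Type*} {f : Perm α} {a b x y : α}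

theorem sameCycle_apply_self (f : Perm α) (x : α) : f.SameCycle x (f x) :=
  sameCycle_apply_right.mpr .rfl

theorem SameCycle.induction_apply [Finite α] {P : α → Prop} (h : f.SameCycle x y) (hx : P x)
    (hf : ∀ z, f.SameCycle x z → P z → P (f z)) : P y := by
  obtain ⟨t, -, rfl⟩ := h.exists_pow_eq'
  induction t with
  | zero => exact hx
  | succ t ih =>
    rw [pow_succ', mul_apply]
    exact hf _ (sameCycle_pow_right.mpr .rfl) (ih (sameCycle_pow_right.mpr .rfl))

variable [DecidableEq α]

theorem SameCycle.swap_apply_right (hab : f.SameCycle a b) (z : α) :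
    f.SameCycle z (swap a b z) := by
  rw [swap_apply_def]
  split_ifs with hza hzb
  · exact hza ▸ hab
  · exact hzb ▸ hab.symm
  · exact .rfl

theorem sameCycle_swap_mul_of_not_sameCycle [Finite α] (h : ¬f.SameCycle a b) :
    (swap a b * f).SameCycle a b := by
  set g := swap a b * f
  have hstep : ∀ z, f.SameCycle a z → g.SameCycle a b ∨ g.SameCycle a z →
      g.SameCycle a b ∨ g.SameCycle a (f z) := by
    rintro z haz (hab | hgz)
    · exact .inl hab
    by_cases hza : f z = a
    · exact .inl (hgz.trans <| by simpa [g, hza] using g.sameCycle_apply_self z)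
    have hzb : f z ≠ b := fun hzb => h (hzb ▸ haz.trans (f.sameCycle_apply_self z))
    have hgz' : g z = f z := by simp [g, swap_apply_of_ne_of_ne hza hzb]
    exact .inr (hgz' ▸ hgz.trans (g.sameCycle_apply_self z))
  rcases (sameCycle_symm_apply_right.mpr .rfl : f.SameCycle a (f.symm a)).induction_apply
      (.inr .rfl) hstep with hab | hga
  · exact hab
  · simpa [g] using hga.trans (g.sameCycle_apply_self (f.symm a))

theorem SameCycle.swap_mul [Finite α] (hab : (swap a b * f).SameCycle a b) (h : f.SameCycle x y) :
    (swap a b * f).SameCycle x y := by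
  refine h.induction_apply .rfl fun z _ hxz => hxz.trans ?_
  have : f z = swap a b ((swap a b * f) z) := by simp
  exact this ▸ (sameCycle_apply_self _ z).trans (hab.swap_apply_right _)

end Equiv.Perm

def sCPerm (n i : ℕ) : Equiv.Perm (Fin n) :=
  if h : 1 ≤ i ∧ i < n then swap ⟨i - 1, by omega⟩ ⟨i, h.2⟩ else 1

section Path

variable {n : ℕ}

theorem sCPerm_apply_lt_iff {i a : ℕ} (hi : i ≠ a) (z : Fin n) :
    (sCPerm n i z : ℕ) < a ↔ (z : ℕ) < a := by
  unfold sCPerm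
  split_ifs with h
  · rw [swap_apply_def]
    split_ifs <;> simp_all [Fin.ext_iff] <;> omega
  · rfl

theorem list_prod_sCPerm_apply_lt_iff {l : List ℕ} {a : ℕ} (ha : a ∉ l) (z : Fin n) :
    ((l.map (sCPerm n)).prod z : ℕ) < a ↔ (z : ℕ) < a := by
  induction l with
  | nil => rfl
  | cons i l ih =>
    rw [List.mem_cons, not_or] at ha
    rw [List.map_cons, List.prod_cons, Perm.mul_apply, sCPerm_apply_lt_iff (Ne.symm ha.1),
      ih ha.2]

theorem sameCycle_list_prod_sCPerm {l : List ℕ} (hl : l.Nodup) {i : ℕ} (hi : i ∈ l) (h₁ : 1 ≤ i)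
    (h₂ : i < n) : (l.map (sCPerm n)).prod.SameCycle ⟨i - 1, by omega⟩ ⟨i, h₂⟩ := by
  induction l with
  | nil => simp at hi
  | cons a l ih =>
    rw [List.nodup_cons] at hl
    rw [List.map_cons, List.prod_cons]
    by_cases ha : 1 ≤ a ∧ a < n
    · -- no factor of the shorter product moves a point across the cut between `a - 1` and `a`
      have hcut : ¬(l.map (sCPerm n)).prod.SameCycle ⟨a - 1, by omega⟩ ⟨a, ha.2⟩ := fun h => by
        have := h.induction_apply (P := fun z : Fin n => ((z : ℕ) < a ↔ a - 1 < a)) Iff.rfl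
          fun z _ hz => (list_prod_sCPerm_apply_lt_iff hl.1 z).trans hz
        simp only [lt_irrefl, false_iff] at this
        omega
      have hswap := Equiv.Perm.sameCycle_swap_mul_of_not_sameCycle hcut
      rw [sCPerm, dif_pos ha]
      rcases List.mem_cons.mp hi with rfl | hi
      · exact hswap
      · exact hswap.swap_mul (ih hl.2 hi)
    · rw [sCPerm, dif_neg ha, one_mul]
      exact ih hl.2 ((List.mem_cons.mp hi).resolve_left (by omega))

theorem isCycleOn_list_prod_sCPerm {l : List ℕ} (hl : l.Nodup) (h : ∀ i, 1 ≤ i → i < n → i ∈ l) :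
    (l.map (sCPerm n)).prod.IsCycleOn Set.univ := by
  have hzero : ∀ m (hm : m < n), (l.map (sCPerm n)).prod.SameCycle ⟨0, by omega⟩ ⟨m, hm⟩ := by
    intro m hm
    induction m with
    | zero => exact .rfl
    | succ m ih =>
      exact (ih (by omega)).trans (sameCycle_list_prod_sCPerm hl (h _ (by omega) hm) (by omega) hm)
  exact ⟨by simp, fun x _ y _ => (hzero x x.2).symm.trans (hzero y y.2)⟩

end Path

section Monomial

variable {R ι : Type*} [Semiring R]

def IsMonomial (c : (ι → R) ≃ₗ[R] (ι → R)) (σ : Perm ι) (ε : ι → R) : Prop :=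
  ∀ v j, c v (σ j) = ε j * v j

theorem isMonomial_one : IsMonomial (1 : (ι → R) ≃ₗ[R] (ι → R)) 1 1 := fun v j => by simp

theorem IsMonomial.mul {c₁ c₂ : (ι → R) ≃ₗ[R] (ι → R)} {σ₁ σ₂ : Perm ι} {ε₁ ε₂ : ι → R}
    (h₁ : IsMonomial c₁ σ₁ ε₁) (h₂ : IsMonomial c₂ σ₂ ε₂) :
    IsMonomial (c₁ * c₂) (σ₁ * σ₂) (fun j => ε₁ (σ₂ j) * ε₂ j) := fun v j => by
  show c₁ (c₂ v) (σ₁ (σ₂ j)) = _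
  rw [h₁, h₂, mul_assoc]

end Monomial

section CoxeterElement

variable {n : ℕ}

theorem isMonomial_sC_of_ne {i : ℕ} (hi : i ≠ n) : IsMonomial (sC n i) (sCPerm n i) 1 := by
  intro v j
  unfold sC sCPerm
  split_ifs with _ h
  · simp
  · exact absurd h.1 hi
  · simp

theorem isMonomial_sC_self (hn : 0 < n) :
    IsMonomial (sC n n) (sCPerm n n) (update 1 ⟨n - 1, by omega⟩ (-1)) := by
  intro v j
  unfold sC sCPerm
  rw [dif_neg (lt_irrefl n ∘ And.right), dif_neg (lt_irrefl n ∘ And.right), dif_pos ⟨rfl, hn⟩]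
  by_cases hj : j = ⟨n - 1, by omega⟩ <;> simp [negLin, hj]

theorem isMonomial_list_prod_sC_of_not_mem {l : List ℕ} (h : n ∉ l) :
    IsMonomial (l.map (sC n)).prod (l.map (sCPerm n)).prod 1 := by
  induction l with
  | nil => exact isMonomial_one
  | cons i l ih =>
    rw [List.mem_cons, not_or] at h
    simpa [Pi.one_def] using (isMonomial_sC_of_ne (Ne.symm h.1)).mul (ih h.2)

theorem exists_isMonomial_list_prod_sC (hn : 0 < n) {l : List ℕ} (hl : l.Nodup) (h : n ∈ l) :
    ∃ j₀, IsMonomial (l.map (sC n)).prod (l.map (sCPerm n)).prod (update 1 j₀ (-1)) := by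
  induction l with
  | nil => simp at h
  | cons i l ih =>
    rw [List.nodup_cons] at hl
    simp only [List.map_cons, List.prod_cons]
    by_cases hi : i = n
    · subst hi
      refine ⟨(l.map (sCPerm i)).prod⁻¹ ⟨i - 1, by omega⟩, ?_⟩
      convert (isMonomial_sC_self hn).mul (isMonomial_list_prod_sC_of_not_mem hl.1) using 1
      ext j
      simp [update_apply, Equiv.eq_symm_apply, eq_comm]
    · obtain ⟨j₀, hj₀⟩ := ih hl.2 ((List.mem_cons.mp h).resolve_left (Ne.symm hi))
      exact ⟨j₀, by simpa using (isMonomial_sC_of_ne hi).mul hj₀⟩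

end CoxeterElement

section Negacyclic

variable {R ι : Type*} [Ring R] {c : (ι → R) ≃ₗ[R] (ι → R)} {N : ℕ} {k : ℕ → ι}

def IsNegacyclicShift (c : (ι → R) ≃ₗ[R] (ι → R)) (N : ℕ) (k : ℕ → ι) : Prop :=
  (∀ v a, a + 1 < N → c v (k (a + 1)) = v (k a)) ∧ ∀ v, c v (k 0) = -v (k (N - 1))

theorem IsNegacyclicShift.pow_apply (h : IsNegacyclicShift c N k) (v : ι → R) {m a : ℕ}
    (hm : m ≤ N) (ha : a < N) :
    (c ^ m) v (k a) = if m ≤ a then v (k (a - m)) else -v (k (a + N - m)) := by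
  induction m generalizing v with
  | zero => simp
  | succ m ih =>
    rw [pow_succ, LinearEquiv.mul_apply, ih (c v) (by omega)]
    split_ifs with h₁ h₂ h₂
    · rw [show a - m = a - (m + 1) + 1 by omega, h.1 v _ (by omega)]
    · rw [show a - m = 0 by omega, h.2, show a + N - (m + 1) = N - 1 by omega]
    · omega
    · rw [show a + N - m = a + N - (m + 1) + 1 by omega, h.1 v _ (by omega)]

theorem IsNegacyclicShift.isLeast [PartialOrder R] [IsOrderedAddMonoid R]
    (h : IsNegacyclicShift c N k) (hk : ∀ x, ∃ a < N, k a = x) {v : ι → R} (hv₀ : 0 ≤ v)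
    (hv : v ≠ 0) : IsLeast {m | 0 < m ∧ (c ^ m) v = -v} N := by
  have hN : 0 < N := by
    obtain ⟨x, -⟩ := Function.ne_iff.mp hv
    obtain ⟨a, ha, -⟩ := hk x
    omega
  refine ⟨⟨hN, funext fun x => ?_⟩, fun m ⟨hm, hcm⟩ => ?_⟩
  · obtain ⟨a, ha, rfl⟩ := hk x
    rw [h.pow_apply v le_rfl ha, if_neg (by omega), Nat.add_sub_cancel, Pi.neg_apply]
  by_contra! hmN
  have hvanish : ∀ a < N, v (k a) = 0 := by
    intro a ha
    induction hd : N - a using Nat.strong_induction_on generalizing a with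
    | _ d ih =>
    have hka := congrFun hcm (k a)
    rw [h.pow_apply v hmN.le ha, Pi.neg_apply] at hka
    split_ifs at hka with hma
    · exact le_antisymm (neg_nonneg.mp (hka ▸ hv₀ _)) (hv₀ _)
    · rw [← neg_inj.mp hka]
      exact ih _ (by omega) _ (by omega) rfl
  refine hv (funext fun x => ?_)
  obtain ⟨a, ha, rfl⟩ := hk x
  exact hvanish a ha

end Negacyclic

section SignedCycle

variable {R ι : Type*} [Ring R] [Fintype ι] [DecidableEq ι] {c : (ι → R) ≃ₗ[R] (ι → R)}
  {σ : Perm ι} {j₀ : ι}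

theorem IsMonomial.isNegacyclicShift (hσ : σ.IsCycleOn Set.univ)
    (hc : IsMonomial c σ (update 1 j₀ (-1))) :
    IsNegacyclicShift c (Fintype.card ι) fun a => (σ ^ a) (σ j₀) := by
  have hσ' : σ.IsCycleOn (Finset.univ : Finset ι) := by rwa [Finset.coe_univ]
  have hret : ∀ a, (σ ^ a) (σ j₀) = j₀ ↔ Fintype.card ι ∣ a + 1 := fun a => by
    rw [← Perm.mul_apply, ← pow_succ, hσ'.pow_apply_eq (Finset.mem_univ _), Finset.card_univ]
  refine ⟨fun v a ha => ?_, fun v => ?_⟩ <;> dsimp only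
  · have hne : (σ ^ a) (σ j₀) ≠ j₀ := fun h => by
      have := Nat.le_of_dvd (by omega) ((hret a).mp h)
      omega
    rw [pow_succ', Perm.mul_apply, hc, update_of_ne hne, Pi.one_apply, one_mul]
  · have hN : 0 < Fintype.card ι := Fintype.card_pos_iff.mpr ⟨j₀⟩
    rw [pow_zero, Perm.one_apply, hc, update_self, neg_one_mul,
      (hret _).mpr (by rw [Nat.sub_add_cancel hN])]

theorem IsMonomial.isLeast_pow_eq_neg [PartialOrder R] [IsOrderedAddMonoid R]
    (hσ : σ.IsCycleOn Set.univ) (hc : IsMonomial c σ (update 1 j₀ (-1))) {v : ι → R}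
    (hv₀ : 0 ≤ v) (hv : v ≠ 0) :
    IsLeast {m | 0 < m ∧ (c ^ m) v = -v} (Fintype.card ι) := by
  have hσ' : σ.IsCycleOn (Finset.univ : Finset ι) := by rwa [Finset.coe_univ]
  refine (hc.isNegacyclicShift hσ).isLeast (fun x => ?_) hv₀ hv
  simpa using hσ'.exists_pow_eq (Finset.mem_univ (σ j₀)) (Finset.mem_univ x)

end SignedCycle

theorem omegaC_nonneg (n : ℕ) (i : Fin n) : 0 ≤ omegaC n i := fun j => by
  unfold omegaC
  split_ifs <;> norm_num

theorem omegaC_ne_zero (n : ℕ) (i : Fin n) : omegaC n i ≠ 0 := fun h => by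
  simpa [omegaC, Fin.lt_def] using congrFun h ⟨0, i.pos⟩

theorem coxeter_element_least_pow_fundamental_weight_general (n : ℕ)
    (τ : Equiv.Perm (Fin n)) (i : Fin n) :
    IsLeast {m : ℕ | 0 < m ∧
      (((List.ofFn fun k : Fin n => sC n ((τ k : ℕ) + 1)).prod) ^ m) (omegaC n i)
        = -omegaC n i} n := by
  set l := List.ofFn fun k : Fin n => (τ k : ℕ) + 1
  have hl : l.Nodup := List.nodup_ofFn.mpr fun a b h => τ.injective (Fin.ext (by simpa using h))
  have hmem : ∀ j, 1 ≤ j → j ≤ n → j ∈ l := fun j h₁ h₂ =>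
    List.mem_ofFn.mpr ⟨τ.symm ⟨j - 1, by omega⟩, by simp; omega⟩
  obtain ⟨j₀, hc⟩ := exists_isMonomial_list_prod_sC i.pos hl (hmem n i.pos le_rfl)
  have hσ := isCycleOn_list_prod_sCPerm hl fun j h₁ h₂ => hmem j h₁ h₂.le
  rw [show (List.ofFn fun k : Fin n => sC n ((τ k : ℕ) + 1)) = l.map (sC n) by
    simp [l, List.map_ofFn, Function.comp_def]]
  simpa using hc.isLeast_pow_eq_neg hσ (omegaC_nonneg n i) (omegaC_ne_zero n i)

/-- Let `c = s_{τ(1)} ∘ ⋯ ∘ s_{τ(n)}` be any Coxeter element of the Weyl group of type `Cₙ`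
(`n ≥ 3`) acting on `ℝⁿ`.  Then for each fundamental weight `ω_i` (`1 ≤ i ≤ n`), the least
positive integer `m` such that `cᵐ(ω_i) = -ω_i` is `m = n`. -/
theorem coxeter_element_least_pow_fundamental_weight (n : ℕ) (hn : 3 ≤ n)
    (τ : Equiv.Perm (Fin n)) (i : Fin n) :
    IsLeast {m : ℕ | 0 < m ∧
      (((List.ofFn fun k : Fin n => sC n ((τ k : ℕ) + 1)).prod) ^ m) (omegaC n i)
        = -omegaC n i} n :=
  coxeter_element_least_pow_fundamental_weight_general n τ i

end
end

section
/- Let n ≥ a_1 > a_2 > ⋯ > a_r ≥ 1 be a decreasing sequence of integers and set w = (∏_{j=a_1}^{n} s_j)(∏_{j=a_2}^{n} s_j)⋯(∏_{j=a_{r−1}}^{n} s_j)(∏_{j=a_r}^{n−1} s_j) in the Coxeter group W of type Cₙ, where ∏_{j=a}^{b} s_j denotes s_a s_{a+1} ⋯ s_b. Then this expression is reduced; that is, ℓ(w) = Σ_{j=1}^{r−1} (n + 1 − a_j) + (n − a_r). -/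
/-
The word length bounds `ℓ(w)` from above. For the lower bound realise `W` as signed permutations
of `±[1, n]`, written as permutations of `[1, 2n]` commuting with `k ↦ 2n + 1 - k` (so `-k`
becomes `2n + 1 - k`, and the order `1 < ⋯ < n < -n < ⋯ < -1` becomes the usual one): `s_i` acts
as `(i i+1)(2n-i 2n+1-i)` for `i < n` and `s_n` as `(n n+1)`. Twice the type B inversion number,
`inv + #{p ≤ n | g p > n}`, grows by at most `2` under right multiplication by a generator, hence
is at most `2ℓ`. Multiplying out the runs one generator at a time, every step is an ascent: before
the letter `s_m` of a run starting at `c` the current element sends `m` to `c` and `m + 1` above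
`c`, and a full run `s_c ⋯ s_n` leaves `1, …, c - 1` fixed while sending everything else above
`c`, which is what the next, shorter run needs. So the statistic reaches twice the word length.
-/

variable {W : Type*} [Group W]

/-- The simple reflection `s_i` (1-indexed, `1 ≤ i ≤ n`) of a Coxeter system of type `Cₙ`
(whose Coxeter matrix is `CoxeterMatrix.Bₙ n`: bonds `m(s_i, s_{i+1}) = 3` for
`1 ≤ i ≤ n-2`, `m(s_{n-1}, s_n) = 4`, and `m(s_i, s_j) = 2` for `|i - j| ≥ 2`);
junk value `1` for `i` out of range. -/
noncomputable def sN {n : ℕ} (cs : CoxeterSystem (CoxeterMatrix.Bₙ n) W) (i : ℕ) : W :=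
  if h : 1 ≤ i ∧ i ≤ n then cs.simple ⟨i - 1, by omega⟩ else 1

/-- `[a, b] := s_a s_{a+1} ⋯ s_b` (1-indexed; equal to `1` if `b < a`). -/
noncomputable def intv {n : ℕ} (cs : CoxeterSystem (CoxeterMatrix.Bₙ n) W) (a b : ℕ) : W :=
  ((List.range' a (b + 1 - a)).map (sN cs)).prod

/-- `c` is a Coxeter element of `W`: `c = s_{τ(1)} s_{τ(2)} ⋯ s_{τ(n)}` for some
permutation `τ` of the `n` simple reflections. -/
def IsCoxeterElement {n : ℕ} (cs : CoxeterSystem (CoxeterMatrix.Bₙ n) W) (c : W) : Prop :=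
  ∃ τ : Equiv.Perm (Fin n), c = cs.wordProd (List.ofFn fun k => τ k)

open Equiv Finset

section General

lemma swap_apply_of_eq_left {α : Type*} [DecidableEq α] {a b x : α} (h : x = a) :
    swap a b x = b :=
  h ▸ swap_apply_left a b

lemma swap_apply_of_eq_right {α : Type*} [DecidableEq α] {a b x : α} (h : x = b) :
    swap a b x = a :=
  h ▸ swap_apply_right a b

lemma swap_apply_mem_iff {α : Type*} [DecidableEq α] {s : Finset α} {a b : α} (ha : a ∈ s)
    (hb : b ∈ s) (x : α) : swap a b x ∈ s ↔ x ∈ s := by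
  rw [swap_apply_def]
  split_ifs <;> simp_all

lemma pow_mul_comm_eq_one {G : Type*} [Group G] {x y : G} {k : ℕ} (h : (x * y) ^ k = 1) :
    (y * x) ^ k = 1 := by
  have hconj : SemiconjBy x (y * x) (x * y) := (mul_assoc x y x).symm
  have := hconj.pow_right k
  rwa [SemiconjBy, h, one_mul, mul_eq_left] at this

lemma card_filter_add_card_filter_of_iff {α : Type*} [DecidableEq α] {S T : Finset α}
    {P Q : α → Prop} [DecidablePred P] [DecidablePred Q] (hT : T ⊆ S)
    (hPQ : ∀ x ∈ S, x ∉ T → (P x ↔ Q x)) :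
    #{x ∈ S | P x} + #{x ∈ T | Q x} = #{x ∈ S | Q x} + #{x ∈ T | P x} := by
  have hout : #{x ∈ S \ T | P x} = #{x ∈ S \ T | Q x} :=
    congrArg card <| filter_congr fun x hx ↦ by rw [mem_sdiff] at hx; exact hPQ x hx.1 hx.2
  have hdisj (R : α → Prop) [DecidablePred R] : Disjoint {x ∈ S \ T | R x} {x ∈ T | R x} :=
    disjoint_sdiff_self_left.mono (filter_subset _ _) (filter_subset _ _)
  rw [← sdiff_union_of_subset hT, filter_union, filter_union, card_union_of_disjoint (hdisj P),
    card_union_of_disjoint (hdisj Q), hout]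
  ring

end General

section Coxeter

variable {B : Type*} {M : CoxeterMatrix B} (cs : CoxeterSystem M W)

theorem CoxeterSystem.le_mul_length {f : W → ℕ} {k : ℕ} (h1 : f 1 = 0)
    (hs : ∀ w i, f (w * cs.simple i) ≤ f w + k) (w : W) : f w ≤ k * cs.length w := by
  have hword (ω : List B) : f (cs.wordProd ω) ≤ k * ω.length := by
    induction ω using List.reverseRecOn with
    | nil => simp [h1]
    | append_singleton ω i ih =>
      rw [cs.wordProd_append, cs.wordProd_singleton, List.length_append, List.length_singleton,
        mul_add, mul_one]
      exact (hs _ i).trans (by omega)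
  obtain ⟨ω, hω, rfl⟩ := cs.exists_isReduced w
  exact hω.eq ▸ hword ω

theorem CoxeterSystem.length_list_prod_le (l : List W) :
    cs.length l.prod ≤ (l.map cs.length).sum := by
  induction l with
  | nil => simp
  | cons w l ih =>
    rw [List.prod_cons, List.map_cons, List.sum_cons]
    exact (cs.length_mul_le _ _).trans (by omega)

end Coxeter

section Inversions

def invCount (s : Finset ℤ) (g : Perm ℤ) : ℕ := #{z ∈ s ×ˢ s | z.1 < z.2 ∧ g z.2 < g z.1}

lemma invCount_one (s : Finset ℤ) : invCount s 1 = 0 := by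
  rw [invCount, card_eq_zero, filter_eq_empty_iff]
  intro z _ h
  simp only [Perm.one_apply] at h
  omega

lemma invCount_mul_swap {s : Finset ℤ} {p : ℤ} (hp : p ∈ s) (hp' : p + 1 ∈ s) (g : Perm ℤ) :
    invCount s (g * swap p (p + 1)) + (if g (p + 1) < g p then 1 else 0) =
      invCount s g + (if g p < g (p + 1) then 1 else 0) := by
  set τ := swap p (p + 1)
  set T : Finset (ℤ × ℤ) := {(p, p + 1), (p + 1, p)}
  have hreindex : invCount s (g * τ) = #{z ∈ s ×ˢ s | τ z.1 < τ z.2 ∧ g z.2 < g z.1} := by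
    refine card_equiv (τ.prodCongr τ) fun z ↦ ?_
    rw [mem_filter, mem_filter]
    simp only [mem_product, prodCongr_apply, Prod.map_fst, Prod.map_snd, Perm.mul_apply, τ,
      swap_apply_self, swap_apply_mem_iff hp hp']
  have hT : T ⊆ s ×ˢ s := by simp [T, insert_subset_iff, hp, hp']
  have hTne : (p, p + 1) ≠ (p + 1, p) := by simp
  have hTτ : #{z ∈ T | τ z.1 < τ z.2 ∧ g z.2 < g z.1} = if g p < g (p + 1) then 1 else 0 := by
    simp [T, card_filter, sum_pair hTne, τ]
  have hTid : #{z ∈ T | z.1 < z.2 ∧ g z.2 < g z.1} = if g (p + 1) < g p then 1 else 0 := by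
    simp [T, card_filter, sum_pair hTne]
  rw [hreindex, invCount, ← hTτ, ← hTid]
  refine card_filter_add_card_filter_of_iff hT fun z _ hz ↦ ?_
  simp only [T, mem_insert, mem_singleton, not_or, Prod.ext_iff] at hz
  simp only [τ, swap_apply_def]
  split_ifs <;> omega

lemma invCount_mul_swap_le {s : Finset ℤ} {p : ℤ} (hp : p ∈ s) (hp' : p + 1 ∈ s) (g : Perm ℤ) :
    invCount s (g * swap p (p + 1)) ≤ invCount s g + 1 := by
  have := invCount_mul_swap hp hp' g
  split_ifs at this <;> omega

lemma invCount_mul_swap_of_lt {s : Finset ℤ} {p : ℤ} (hp : p ∈ s) (hp' : p + 1 ∈ s)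
    {g : Perm ℤ} (h : g p < g (p + 1)) : invCount s (g * swap p (p + 1)) = invCount s g + 1 := by
  have := invCount_mul_swap hp hp' g
  rw [if_neg h.not_gt, if_pos h] at this
  omega

end Inversions

section SignedPermutations

variable {n : ℕ}

def mirror (n : ℕ) : Perm ℤ := Equiv.subLeft (2 * n + 1)

lemma apply_two_mul_add_one_sub {g : Perm ℤ} (hg : g ∈ Subgroup.centralizer {mirror n})
    (x : ℤ) : g (2 * n + 1 - x) = 2 * n + 1 - g x := by
  simpa [mirror] using congrArg (· x) (Subgroup.mem_centralizer_singleton_iff.mp hg)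

/-- Meaningful for `1 ≤ i ≤ n` only: every `i ≥ n` gives `s_n`. -/
def gen (n i : ℕ) : Perm ℤ :=
  if i < n then swap (i : ℤ) (i + 1) * swap (2 * n - i : ℤ) (2 * n - i + 1)
  else swap (n : ℤ) (n + 1)

lemma gen_of_lt {i : ℕ} (hi : i < n) :
    gen n i = swap (i : ℤ) (i + 1) * swap (2 * n - i : ℤ) (2 * n - i + 1) :=
  if_pos hi

lemma gen_self (n : ℕ) : gen n n = swap (n : ℤ) (n + 1) := if_neg (lt_irrefl n)

lemma gen_apply_of_le {i : ℕ} (hi : i < n) {v : ℤ} (hv : v ≤ n) :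
    gen n i v = swap (i : ℤ) (i + 1) v := by
  rw [gen_of_lt hi, Perm.mul_apply, swap_apply_of_ne_of_ne (x := v) (by omega) (by omega)]

lemma gen_mul_self (n i : ℕ) : gen n i * gen n i = 1 := by
  unfold gen
  split_ifs with hi
  · ext x
    simp only [Perm.mul_apply, Perm.one_apply]
    rcases show x = i ∨ x = i + 1 ∨ x = 2 * n - i ∨ x = 2 * n - i + 1 ∨
        (x ≠ i ∧ x ≠ i + 1 ∧ x ≠ 2 * n - i ∧ x ≠ 2 * n - i + 1) by omega
      with rfl | rfl | rfl | rfl | ⟨h1, h2, h3, h4⟩ <;>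
      simp (disch := omega) only [swap_apply_of_eq_left, swap_apply_of_eq_right,
        swap_apply_of_ne_of_ne]
  · exact swap_mul_self _ _

lemma gen_mem_centralizer (n i : ℕ) : gen n i ∈ Subgroup.centralizer {mirror n} := by
  rw [Subgroup.mem_centralizer_singleton_iff]
  ext x
  simp only [Perm.mul_apply, mirror, Equiv.subLeft_apply]
  unfold gen
  split_ifs with hi
  · simp only [Perm.mul_apply]
    rcases show x = i ∨ x = i + 1 ∨ x = 2 * n - i ∨ x = 2 * n - i + 1 ∨
        (x ≠ i ∧ x ≠ i + 1 ∧ x ≠ 2 * n - i ∧ x ≠ 2 * n - i + 1) by omega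
      with rfl | rfl | rfl | rfl | ⟨h1, h2, h3, h4⟩ <;>
      simp (disch := omega) only [swap_apply_of_eq_left, swap_apply_of_eq_right,
        swap_apply_of_ne_of_ne] <;> omega
  · rcases show x = n ∨ x = n + 1 ∨ (x ≠ n ∧ x ≠ n + 1) by omega with rfl | rfl | ⟨h1, h2⟩ <;>
      simp (disch := omega) only [swap_apply_of_eq_left, swap_apply_of_eq_right,
        swap_apply_of_ne_of_ne] <;> omega

lemma gen_mul_gen_pow_two {i j : ℕ} (hij : i + 2 ≤ j) (hj : j ≤ n) :
    (gen n i * gen n j) ^ 2 = 1 := by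
  rw [gen_of_lt (by omega)]
  ext x
  rcases hj.lt_or_eq with hj | rfl
  · rw [gen_of_lt hj]
    simp only [pow_succ, pow_zero, one_mul, Perm.mul_apply, Perm.one_apply]
    rcases show x = i ∨ x = i + 1 ∨ x = 2 * n - i ∨ x = 2 * n - i + 1 ∨ x = j ∨ x = j + 1 ∨
        x = 2 * n - j ∨ x = 2 * n - j + 1 ∨ (x ≠ i ∧ x ≠ i + 1 ∧ x ≠ 2 * n - i ∧
        x ≠ 2 * n - i + 1 ∧ x ≠ j ∧ x ≠ j + 1 ∧ x ≠ 2 * n - j ∧ x ≠ 2 * n - j + 1) by omega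
      with rfl | rfl | rfl | rfl | rfl | rfl | rfl | rfl | ⟨h1, h2, h3, h4, h5, h6, h7, h8⟩ <;>
      simp (disch := omega) only [swap_apply_of_eq_left, swap_apply_of_eq_right,
        swap_apply_of_ne_of_ne]
  · rw [gen_self]
    simp only [pow_succ, pow_zero, one_mul, Perm.mul_apply, Perm.one_apply]
    rcases show x = i ∨ x = i + 1 ∨ x = 2 * j - i ∨ x = 2 * j - i + 1 ∨ x = j ∨ x = j + 1 ∨
        (x ≠ i ∧ x ≠ i + 1 ∧ x ≠ 2 * j - i ∧ x ≠ 2 * j - i + 1 ∧ x ≠ j ∧ x ≠ j + 1) by omega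
      with rfl | rfl | rfl | rfl | rfl | rfl | ⟨h1, h2, h3, h4, h5, h6⟩ <;>
      simp (disch := omega) only [swap_apply_of_eq_left, swap_apply_of_eq_right,
        swap_apply_of_ne_of_ne]

lemma gen_mul_gen_succ_pow_three {i : ℕ} (hi : i + 1 < n) :
    (gen n i * gen n (i + 1)) ^ 3 = 1 := by
  rw [gen_of_lt (by omega), gen_of_lt hi]
  ext x
  simp only [pow_succ, pow_zero, one_mul, Perm.mul_apply, Perm.one_apply]
  push_cast
  rcases show x = i ∨ x = i + 1 ∨ x = i + 2 ∨ x = 2 * n - i - 1 ∨ x = 2 * n - i ∨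
      x = 2 * n - i + 1 ∨ (x ≠ i ∧ x ≠ i + 1 ∧ x ≠ i + 2 ∧ x ≠ 2 * n - i - 1 ∧ x ≠ 2 * n - i ∧
      x ≠ 2 * n - i + 1) by omega
    with rfl | rfl | rfl | rfl | rfl | rfl | ⟨h1, h2, h3, h4, h5, h6⟩ <;>
    simp (disch := omega) only [swap_apply_of_eq_left, swap_apply_of_eq_right,
      swap_apply_of_ne_of_ne] <;> omega

lemma gen_mul_gen_succ_pow_four {i : ℕ} (hi : i + 1 = n) :
    (gen n i * gen n (i + 1)) ^ 4 = 1 := by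
  subst hi
  rw [gen_of_lt (by omega), gen_self]
  ext x
  simp only [pow_succ, pow_zero, one_mul, Perm.mul_apply, Perm.one_apply]
  push_cast
  rcases show x = i ∨ x = i + 1 ∨ x = i + 2 ∨ x = i + 3 ∨
      (x ≠ i ∧ x ≠ i + 1 ∧ x ≠ i + 2 ∧ x ≠ i + 3) by omega
    with rfl | rfl | rfl | rfl | ⟨h1, h2, h3, h4⟩ <;>
    simp (disch := omega) only [swap_apply_of_eq_left, swap_apply_of_eq_right,
      swap_apply_of_ne_of_ne] <;> omega

theorem isLiftable_gen (n : ℕ) :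
    (CoxeterMatrix.B n).IsLiftable fun k : Fin n ↦ gen n (k + 1) := by
  have hlt (i j : Fin n) (hij : i < j) :
      (gen n (i + 1) * gen n (j + 1)) ^ CoxeterMatrix.B n i j = 1 := by
    have hij' : (i : ℕ) < j := hij
    simp only [CoxeterMatrix.B, Matrix.of_apply]
    split_ifs
    · omega
    · rw [show (j : ℕ) + 1 = i + 1 + 1 by omega]
      exact gen_mul_gen_succ_pow_four (by omega)
    · rw [show (j : ℕ) + 1 = i + 1 + 1 by omega]
      exact gen_mul_gen_succ_pow_three (by omega)
    · exact gen_mul_gen_pow_two (by omega) (by omega)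
  intro i j
  rcases lt_trichotomy i j with h | rfl | h
  · exact hlt i j h
  · simp [gen_mul_self]
  · rw [CoxeterMatrix.symmetric]
    exact pow_mul_comm_eq_one (hlt j i h)

noncomputable def negCount (n : ℕ) (g : Perm ℤ) : ℕ := #{v ∈ Icc (1 : ℤ) n | (n : ℤ) < g v}

lemma negCount_mul_gen_of_lt (g : Perm ℤ) {i : ℕ} (hi : 1 ≤ i) (hin : i < n) :
    negCount n (g * gen n i) = negCount n g := by
  refine card_equiv (gen n i) fun v ↦ ?_
  rw [mem_filter, mem_filter, mem_Icc, mem_Icc, Perm.mul_apply]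
  rw [gen_of_lt hin, Perm.mul_apply, swap_apply_def, swap_apply_def]
  split_ifs <;> omega

lemma negCount_mul_gen_self (g : Perm ℤ) (hn : 1 ≤ n) :
    negCount n (g * gen n n) + (if (n : ℤ) < g n then 1 else 0) =
      negCount n g + (if (n : ℤ) < g (n + 1) then 1 else 0) := by
  have hT : {(n : ℤ)} ⊆ Icc (1 : ℤ) n := by simp [hn]
  have hP : #{v ∈ ({(n : ℤ)} : Finset ℤ) | (n : ℤ) < (g * gen n n) v} =
      if (n : ℤ) < g (n + 1) then 1 else 0 := by
    rw [card_filter, sum_singleton, Perm.mul_apply, gen_self, swap_apply_left]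
  have hQ : #{v ∈ ({(n : ℤ)} : Finset ℤ) | (n : ℤ) < g v} = if (n : ℤ) < g n then 1 else 0 := by
    rw [card_filter, sum_singleton]
  rw [negCount, negCount, ← hP, ← hQ]
  refine card_filter_add_card_filter_of_iff hT fun v hv hvn ↦ ?_
  rw [mem_Icc] at hv
  rw [mem_singleton] at hvn
  rw [Perm.mul_apply, gen_self, swap_apply_of_ne_of_ne hvn (by omega)]

noncomputable def doubledInvCount (n : ℕ) (g : Perm ℤ) : ℕ :=
  invCount (Icc 1 (2 * n)) g + negCount n g

lemma doubledInvCount_one (n : ℕ) : doubledInvCount n 1 = 0 := by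
  rw [doubledInvCount, invCount_one, zero_add, negCount, card_eq_zero, filter_eq_empty_iff]
  intro v hv
  rw [mem_Icc] at hv
  simpa using hv.2

lemma doubledInvCount_mul_gen_le (g : Perm ℤ) {i : ℕ} (hi : 1 ≤ i) (hin : i ≤ n) :
    doubledInvCount n (g * gen n i) ≤ doubledInvCount n g + 2 := by
  rcases hin.lt_or_eq with hin | hin
  · have h1 := invCount_mul_swap_le (s := Icc 1 (2 * n)) (p := i) (mem_Icc.mpr (by omega))
      (mem_Icc.mpr (by omega)) g
    have h2 := invCount_mul_swap_le (s := Icc 1 (2 * n)) (p := 2 * n - i) (mem_Icc.mpr (by omega))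
      (mem_Icc.mpr (by omega)) (g * swap (i : ℤ) (i + 1))
    rw [doubledInvCount, doubledInvCount, negCount_mul_gen_of_lt g hi hin, gen_of_lt hin,
      ← mul_assoc]
    omega
  · subst i
    have h1 := invCount_mul_swap_le (s := Icc 1 (2 * n)) (p := n) (mem_Icc.mpr (by omega))
      (mem_Icc.mpr (by omega)) g
    have h2 := negCount_mul_gen_self g hi
    rw [← gen_self] at h1
    rw [doubledInvCount, doubledInvCount]
    split_ifs at h2 <;> omega

lemma doubledInvCount_mul_gen_of_lt {g : Perm ℤ} (hg : g ∈ Subgroup.centralizer {mirror n})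
    {i : ℕ} (hi : 1 ≤ i) (hin : i < n) (hasc : g i < g (i + 1)) :
    doubledInvCount n (g * gen n i) = doubledInvCount n g + 2 := by
  have hmirror : g (2 * n - i) < g (2 * n - i + 1) := by
    rw [show (2 * n - i : ℤ) = 2 * n + 1 - (i + 1) by ring,
      show (2 * n + 1 - (i + 1) + 1 : ℤ) = 2 * n + 1 - i by ring,
      apply_two_mul_add_one_sub hg, apply_two_mul_add_one_sub hg]
    omega
  have h1 := invCount_mul_swap_of_lt (s := Icc 1 (2 * n)) (p := i) (mem_Icc.mpr (by omega))
    (mem_Icc.mpr (by omega)) hasc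
  have h2 := invCount_mul_swap_of_lt (s := Icc 1 (2 * n)) (p := 2 * n - i) (mem_Icc.mpr (by omega))
    (mem_Icc.mpr (by omega)) (g := g * swap (i : ℤ) (i + 1)) (by
      simpa [swap_apply_of_ne_of_ne, show (2 * n - i : ℤ) ≠ i by omega,
        show (2 * n - i : ℤ) ≠ i + 1 by omega, show (2 * n - i + 1 : ℤ) ≠ i by omega,
        show (2 * n - i + 1 : ℤ) ≠ i + 1 by omega] using hmirror)
  rw [doubledInvCount, doubledInvCount, negCount_mul_gen_of_lt g hi hin, gen_of_lt hin,
    ← mul_assoc, h2, h1]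
  ring

lemma doubledInvCount_mul_gen_self {g : Perm ℤ} (hg : g ∈ Subgroup.centralizer {mirror n})
    (hn : 1 ≤ n) (hgn : g n ≤ n) : doubledInvCount n (g * gen n n) = doubledInvCount n g + 2 := by
  have hnext := apply_two_mul_add_one_sub hg n
  rw [show (2 * n + 1 - n : ℤ) = n + 1 by ring] at hnext
  have h1 := invCount_mul_swap_of_lt (s := Icc 1 (2 * n)) (p := n) (mem_Icc.mpr (by omega))
    (mem_Icc.mpr (by omega)) (g := g) (by omega)
  have h2 := negCount_mul_gen_self g hn
  rw [if_neg (by omega), if_pos (by omega)] at h2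
  rw [doubledInvCount, doubledInvCount, gen_self, h1, ← gen_self]
  omega

end SignedPermutations

section Runs

variable {n : ℕ}

def run (n c m : ℕ) : Perm ℤ := ((List.range' c (m + 1 - c)).map (gen n)).prod

lemma run_of_le {c m : ℕ} (h : m + 1 ≤ c) : run n c m = 1 := by
  rw [run, Nat.sub_eq_zero_of_le h, List.range'_zero, List.map_nil, List.prod_nil]

lemma run_succ {c m : ℕ} (h : c ≤ m + 1) : run n c (m + 1) = run n c m * gen n (m + 1) := by
  rw [run, run, show m + 1 + 1 - c = m + 1 - c + 1 by omega, List.range'_1_concat,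
    List.map_append, List.prod_append, show c + (m + 1 - c) = m + 1 by omega]
  simp

lemma run_mem_centralizer (n c m : ℕ) : run n c m ∈ Subgroup.centralizer {mirror n} :=
  Subgroup.list_prod_mem _ fun _ hx ↦ by
    obtain ⟨i, -, rfl⟩ := List.mem_map.mp hx
    exact gen_mem_centralizer n i

lemma run_apply {c m : ℕ} (hc : 1 ≤ c) (hm : m < n) {v : ℤ} (hv : 1 ≤ v) (hvn : v ≤ n) :
    run n c m v = if v < c ∨ m + 1 < v then v else if v = m + 1 then c else v + 1 := by
  induction m generalizing v with
  | zero =>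
    rw [run_of_le hc, Perm.one_apply]
    split_ifs <;> omega
  | succ m ih =>
    rcases Nat.lt_or_ge (m + 1) c with hmc | hmc
    · rw [run_of_le hmc, Perm.one_apply]
      split_ifs <;> omega
    · rw [run_succ hmc, Perm.mul_apply, gen_apply_of_le hm hvn, swap_apply_def]
      push_cast
      split_ifs with h1 h2 <;> rw [ih (by omega) (by omega) (by omega)] <;> split_ifs <;> omega

lemma run_apply_succ {c m : ℕ} (hc : 1 ≤ c) (hcm : c ≤ m + 1) (hm : m < n) :
    run n c m (m + 1) = c := by
  rw [run_apply hc hm (by omega) (by omega)]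
  split_ifs <;> omega

lemma run_apply_of_lt {c m : ℕ} (hc : 1 ≤ c) (hm : m < n) {v : ℤ} (hv : m + 1 < v)
    (hvn : v ≤ n) : run n c m v = v := by
  rw [run_apply hc hm (by omega) hvn, if_pos (Or.inr hv)]

lemma run_apply_self {c : ℕ} (hc : 1 ≤ c) (hcn : c ≤ n) {v : ℤ} (hv : 1 ≤ v) (hvn : v ≤ n) :
    run n c n v = if v < c then v else if v < n then v + 1 else 2 * n + 1 - c := by
  obtain ⟨m, rfl⟩ : ∃ m, n = m + 1 := ⟨n - 1, by omega⟩
  rw [run_succ hcn, Perm.mul_apply, gen_self]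
  rcases hvn.lt_or_eq with hvn | rfl
  · rw [swap_apply_of_ne_of_ne (by omega) (by omega), run_apply hc (by omega) hv (by omega)]
    split_ifs <;> omega
  · rw [swap_apply_left, show ((m + 1 : ℕ) : ℤ) + 1 = 2 * (m + 1 : ℕ) + 1 - (m + 1 : ℕ) by ring,
      apply_two_mul_add_one_sub (run_mem_centralizer _ _ _)]
    push_cast
    rw [run_apply_succ hc hcn (by omega), if_neg (by omega), if_neg (by omega)]

def FixesUpTo (n c : ℕ) (g : Perm ℤ) : Prop :=
  (∀ v : ℤ, 1 ≤ v → v ≤ c → g v = v) ∧ ∀ v : ℤ, c < v → v ≤ n → c < g v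

lemma fixesUpTo_one (n c : ℕ) : FixesUpTo n c 1 :=
  ⟨fun _ _ _ ↦ rfl, fun _ hv _ ↦ hv⟩

lemma FixesUpTo.mul_run {g : Perm ℤ} {c c' : ℕ} (hfix : FixesUpTo n c g)
    (hg : g ∈ Subgroup.centralizer {mirror n}) (hc : 1 ≤ c) (hcn : c ≤ n) (hc' : c' < c) :
    FixesUpTo n c' (g * run n c n) := by
  constructor
  · intro v hv hvc
    rw [Perm.mul_apply, run_apply_self hc hcn hv (by omega), if_pos (by omega),
      hfix.1 v hv (by omega)]
  · intro v hv hvn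
    rw [Perm.mul_apply, run_apply_self hc hcn (by omega) hvn]
    split_ifs with h1 h2
    · rw [hfix.1 v (by omega) (by omega)]
      exact hv
    · have := hfix.2 (v + 1) (by omega) (by omega)
      omega
    · rw [apply_two_mul_add_one_sub hg, hfix.1 c (by omega) le_rfl]
      omega

lemma doubledInvCount_mul_run {g : Perm ℤ} {c : ℕ} (hfix : FixesUpTo n c g)
    (hg : g ∈ Subgroup.centralizer {mirror n}) (hc : 1 ≤ c) {m : ℕ} (hm : m < n) :
    doubledInvCount n (g * run n c m) = doubledInvCount n g + 2 * (m + 1 - c) := by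
  induction m with
  | zero => rw [run_of_le hc, mul_one]; omega
  | succ m ih =>
    rcases Nat.lt_or_ge (m + 1) c with hmc | hmc
    · rw [run_of_le hmc, mul_one]; omega
    · have hasc : (g * run n c m) ((m + 1 : ℕ) : ℤ) < (g * run n c m) ((m + 1 : ℕ) + 1) := by
        rw [Perm.mul_apply, Perm.mul_apply]
        push_cast
        rw [run_apply_succ hc hmc (by omega),
          run_apply_of_lt hc (by omega) (by omega) (by omega), hfix.1 c (by omega) le_rfl]
        exact hfix.2 _ (by omega) (by omega)
      rw [run_succ hmc, ← mul_assoc, doubledInvCount_mul_gen_of_lt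
        (mul_mem hg (run_mem_centralizer _ _ _)) (by omega) hm hasc, ih (by omega)]
      omega

lemma doubledInvCount_mul_run_self {g : Perm ℤ} {c : ℕ} (hfix : FixesUpTo n c g)
    (hg : g ∈ Subgroup.centralizer {mirror n}) (hc : 1 ≤ c) (hcn : c ≤ n) :
    doubledInvCount n (g * run n c n) = doubledInvCount n g + 2 * (n + 1 - c) := by
  obtain ⟨m, rfl⟩ : ∃ m, n = m + 1 := ⟨n - 1, by omega⟩
  have hgn : (g * run (m + 1) c m) ((m + 1 : ℕ) : ℤ) ≤ (m + 1 : ℕ) := by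
    rw [Perm.mul_apply]
    push_cast
    rw [run_apply_succ hc hcn (by omega), hfix.1 c (by omega) le_rfl]
    exact_mod_cast hcn
  rw [run_succ hcn, ← mul_assoc, doubledInvCount_mul_gen_self
    (mul_mem hg (run_mem_centralizer _ _ _)) (by omega) hgn,
    doubledInvCount_mul_run hfix hg hc (by omega)]
  omega

def fullRuns (n : ℕ) (a : ℕ → ℕ) (k : ℕ) : Perm ℤ :=
  ((List.range' 1 k).map fun j ↦ run n (a j) n).prod

lemma fullRuns_mem_centralizer (n : ℕ) (a : ℕ → ℕ) (k : ℕ) :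
    fullRuns n a k ∈ Subgroup.centralizer {mirror n} :=
  Subgroup.list_prod_mem _ fun _ hx ↦ by
    obtain ⟨j, -, rfl⟩ := List.mem_map.mp hx
    exact run_mem_centralizer n (a j) n

lemma fullRuns_succ (a : ℕ → ℕ) (k : ℕ) :
    fullRuns n a (k + 1) = fullRuns n a k * run n (a (k + 1)) n := by
  rw [fullRuns, fullRuns, List.range'_1_concat, List.map_append, List.prod_append, add_comm 1 k]
  simp

lemma doubledInvCount_fullRuns {a : ℕ → ℕ} {k : ℕ}
    (ha : ∀ j, 1 ≤ j → j ≤ k → 1 ≤ a j ∧ a j ≤ n)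
    (hdec : ∀ j, 1 ≤ j → j ≤ k → a (j + 1) < a j) :
    doubledInvCount n (fullRuns n a k) = 2 * ∑ j ∈ Icc 1 k, (n + 1 - a j) ∧
      FixesUpTo n (a (k + 1)) (fullRuns n a k) := by
  induction k with
  | zero => simp [fullRuns, doubledInvCount_one, fixesUpTo_one]
  | succ k ih =>
    obtain ⟨hcount, hfix⟩ := ih (fun j h1 h2 ↦ ha j h1 (by omega))
      (fun j h1 h2 ↦ hdec j h1 (by omega))
    have hsym := fullRuns_mem_centralizer n a k
    obtain ⟨hc, hcn⟩ := ha (k + 1) (by omega) le_rfl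
    rw [fullRuns_succ, doubledInvCount_mul_run_self hfix hsym hc hcn, hcount,
      sum_Icc_succ_top (by omega)]
    exact ⟨by ring, hfix.mul_run hsym hc hcn (hdec (k + 1) (by omega) le_rfl)⟩

end Runs

section TypeC

variable {n : ℕ} (cs : CoxeterSystem (CoxeterMatrix.Bₙ n) W)

def rho : W →* Perm ℤ := cs.lift ⟨fun k ↦ gen n (k + 1), isLiftable_gen n⟩

lemma rho_simple (k : Fin n) : rho cs (cs.simple k) = gen n (k + 1) :=
  cs.lift_apply_simple (isLiftable_gen n) k

lemma doubledInvCount_rho_le (w : W) : doubledInvCount n (rho cs w) ≤ 2 * cs.length w :=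
  cs.le_mul_length (f := fun w ↦ doubledInvCount n (rho cs w))
    (by rw [map_one, doubledInvCount_one])
    (fun w i ↦ by
      rw [map_mul, rho_simple]
      exact doubledInvCount_mul_gen_le _ (by omega) i.is_lt) w

lemma rho_intv {c b : ℕ} (hc : 1 ≤ c) (hb : b ≤ n) : rho cs (intv cs c b) = run n c b := by
  unfold intv run
  rw [map_list_prod, List.map_map]
  congr 1
  refine List.map_congr_left fun i hi ↦ ?_
  rw [List.mem_range'_1] at hi
  rw [Function.comp_apply]
  unfold sN
  rw [dif_pos (by omega), rho_simple]
  congr 1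
  show i - 1 + 1 = i
  omega

lemma rho_prod_intv {a : ℕ → ℕ} {k : ℕ} (ha : ∀ j, 1 ≤ j → j ≤ k → 1 ≤ a j) :
    rho cs (((List.range' 1 k).map fun j ↦ intv cs (a j) n).prod) = fullRuns n a k := by
  rw [map_list_prod, List.map_map, fullRuns]
  congr 1
  refine List.map_congr_left fun j hj ↦ ?_
  rw [List.mem_range'_1] at hj
  exact rho_intv cs (ha j (by omega) (by omega)) le_rfl

lemma length_intv_le (c b : ℕ) : cs.length (intv cs c b) ≤ b + 1 - c := by
  refine (cs.length_list_prod_le _).trans ?_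
  rw [List.map_map]
  refine (List.sum_le_card_nsmul _ 1 fun x hx ↦ ?_).trans (by simp)
  obtain ⟨i, -, rfl⟩ := List.mem_map.mp hx
  rw [Function.comp_apply]
  unfold sN
  split_ifs <;> simp

lemma length_prod_intv_le (a : ℕ → ℕ) (k : ℕ) :
    cs.length (((List.range' 1 k).map fun j ↦ intv cs (a j) n).prod) ≤
      ∑ j ∈ Icc 1 k, (n + 1 - a j) :=
  calc _ ≤ ((List.range' 1 k).map fun j ↦ n + 1 - a j).sum := by
        refine (cs.length_list_prod_le _).trans ?_
        rw [List.map_map]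
        exact List.sum_le_sum fun j _ ↦ length_intv_le cs (a j) n
    _ = ∑ j ∈ Icc 1 k, (n + 1 - a j) := by rw [Nat.Icc_eq_range', Nat.add_sub_cancel]; rfl

end TypeC

theorem reduced_expression_of_descending_runs_general (n : ℕ)
    (cs : CoxeterSystem (CoxeterMatrix.Bₙ n) W)
    (r : ℕ) (hr : 1 ≤ r) (a : ℕ → ℕ) (ha1 : a 1 ≤ n) (har : 1 ≤ a r)
    (hdec : ∀ j, 1 ≤ j → j < r → a (j + 1) < a j) :
    cs.length
        (((List.range' 1 (r - 1)).map fun j => intv cs (a j) n).prod *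
          intv cs (a r) (n - 1)) =
      (∑ j ∈ Finset.Icc 1 (r - 1), (n + 1 - a j)) + (n - a r) := by
  have hanti : AntitoneOn a (Set.Icc 1 r) := antitoneOn_of_add_one_le Set.ordConnected_Icc
    fun j _ hj hj' ↦ (hdec j hj.1 (by simp only [Set.mem_Icc] at hj'; omega)).le
  have hbounds (j : ℕ) (h1 : 1 ≤ j) (h2 : j ≤ r) : 1 ≤ a j ∧ a j ≤ n :=
    ⟨har.trans (hanti ⟨h1, h2⟩ ⟨hr, le_rfl⟩ h2), (hanti ⟨le_rfl, hr⟩ ⟨h1, h2⟩ h1).trans ha1⟩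
  have hn : 1 ≤ n := (hbounds r hr le_rfl).1.trans (hbounds r hr le_rfl).2
  obtain ⟨hcount, hfix⟩ := doubledInvCount_fullRuns (n := n) (k := r - 1)
    (fun j h1 h2 ↦ hbounds j h1 (by omega)) (fun j h1 h2 ↦ hdec j h1 (by omega))
  rw [Nat.sub_add_cancel hr] at hfix
  have hlower := doubledInvCount_rho_le cs
    (((List.range' 1 (r - 1)).map fun j => intv cs (a j) n).prod * intv cs (a r) (n - 1))
  rw [map_mul, rho_prod_intv cs fun j h1 h2 ↦ (hbounds j h1 (by omega)).1,
    rho_intv cs har (by omega), doubledInvCount_mul_run hfix (fullRuns_mem_centralizer n a _) har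
    (by omega), hcount] at hlower
  have hupper := (cs.length_mul_le _ _).trans
    (add_le_add (length_prod_intv_le cs a (r - 1)) (length_intv_le cs (a r) (n - 1)))
  omega

/-- Let `n ≥ a_1 > a_2 > ⋯ > a_r ≥ 1` be a decreasing sequence of integers and set
`w = (∏_{j=a_1}^{n} s_j)(∏_{j=a_2}^{n} s_j) ⋯ (∏_{j=a_{r-1}}^{n} s_j)(∏_{j=a_r}^{n-1} s_j)`
in the Coxeter group `W` of type `Cₙ` (`n ≥ 3`).  Then this expression is reduced, i.e.
`ℓ(w) = Σ_{j=1}^{r-1} (n + 1 - a_j) + (n - a_r)`. -/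
theorem reduced_expression_of_descending_runs (n : ℕ) (hn : 3 ≤ n)
    (cs : CoxeterSystem (CoxeterMatrix.Bₙ n) W)
    (r : ℕ) (hr : 1 ≤ r) (a : ℕ → ℕ) (ha1 : a 1 ≤ n) (har : 1 ≤ a r)
    (hdec : ∀ j, 1 ≤ j → j < r → a (j + 1) < a j) :
    cs.length
        (((List.range' 1 (r - 1)).map fun j => intv cs (a j) n).prod *
          intv cs (a r) (n - 1)) =
      (∑ j ∈ Finset.Icc 1 (r - 1), (n + 1 - a j)) + (n - a r) :=
  reduced_expression_of_descending_runs_general n cs r hr a ha1 har hdec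
end

section
/- Every Coxeter element c of the Coxeter group W of type Cₙ can be written as c = ∏_{j=1}^{k} [a_j, a_{j−1} − 1] for some integer k ≥ 1 and some decreasing sequence n ≥ a_1 > a_2 > ⋯ > a_k = 1, where a_0 := n + 1 (so the first factor is [a_1, n]), and where the product is taken in the order [a_1, a_0 − 1]·[a_2, a_1 − 1]⋯[a_k, a_{k−1} − 1]. -/
/-!
Simple reflections `s_i`, `s_j` with `i + 2 ≤ j` commute. Induct on `n`, inserting `s_{n+1}`
into the normal form of the word with it removed. If `s_n` comes before `s_{n+1}`, then
`s_{n+1}` commutes past every later letter (all have index `< n`) and also past the later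
blocks of the normal form, so it lengthens the first block `[a_1, n]` to `[a_1, n + 1]`.
Otherwise it commutes to the front and becomes the new first block `[n + 1, n + 1]`.
-/

variable {W : Type*} [Group W]

theorem List.Perm.exists_eq_append_cons {α : Type*} {a : α} {l L : List α}
    (h : L.Perm (a :: l)) : ∃ P Q, L = P ++ a :: Q ∧ (P ++ Q).Perm l := by
  obtain ⟨P, Q, rfl⟩ := List.append_of_mem (h.mem_iff.2 List.mem_cons_self)
  exact ⟨P, Q, rfl, (List.perm_middle.symm.trans h).cons_inv⟩

structure IsBlockSeq (n : ℕ) (a : ℕ → ℕ) (k : ℕ) : Prop where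
  zero : a 0 = n + 1
  last : a k = 1
  strictAnti : ∀ j < k, a (j + 1) < a j

namespace IsBlockSeq

variable {n k : ℕ} {a : ℕ → ℕ}

theorem one_le_length (h : IsBlockSeq n a k) (hn : 1 ≤ n) : 1 ≤ k := by
  refine Nat.pos_of_ne_zero fun hk ↦ ?_
  have := h.last
  rw [hk, h.zero] at this
  omega

theorem update (h : IsBlockSeq n a k) (hn : 1 ≤ n) :
    IsBlockSeq (n + 1) (Function.update a 0 (n + 2)) k where
  zero := Function.update_self ..
  last := by rw [Function.update_of_ne (by have := h.one_le_length hn; omega), h.last]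
  strictAnti j hj := by
    rcases j with _ | j
    · simpa using (h.zero ▸ h.strictAnti 0 hj).trans (n + 1).lt_succ_self
    · simpa using h.strictAnti (j + 1) hj

theorem cons (h : IsBlockSeq n a k) :
    IsBlockSeq (n + 1) (fun | 0 => n + 2 | j + 1 => a j) (k + 1) where
  zero := rfl
  last := h.last
  strictAnti
    | 0, _ => by simp [h.zero]
    | j + 1, hj => h.strictAnti j (by omega)

end IsBlockSeq

section BlockProd

variable {M : Type*} [Monoid M]

/-- The block `[a j, a (j - 1))` is the paper's `[a_j, a_{j-1} - 1]`. -/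
def blockProd (f : ℕ → M) (a : ℕ → ℕ) (k : ℕ) : M :=
  ((List.range' 1 k).map fun j => ((List.Ico (a j) (a (j - 1))).map f).prod).prod

theorem blockProd_succ (f : ℕ → M) (a : ℕ → ℕ) (k : ℕ) :
    blockProd f a (k + 1) =
      ((List.Ico (a 1) (a 0)).map f).prod * blockProd f (fun j => a (j + 1)) k := by
  rw [blockProd, blockProd, List.range'_succ, List.map_cons, List.prod_cons,
    ← List.map_add_range' (a := 1) 1 k, List.map_map]
  refine congrArg _ (congrArg _ (List.map_congr_left fun j hj ↦ ?_))
  have := (List.mem_range'_1.1 hj).1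
  simp only [Function.comp_apply, Nat.add_comm 1 j, Nat.add_sub_cancel, Nat.sub_add_cancel this]

variable {f : ℕ → M}

theorem commute_prod_map_of_add_two_le (hf : ∀ i j, i + 2 ≤ j → Commute (f i) (f j))
    {L : List ℕ} {x : ℕ} (hL : ∀ i ∈ L, i + 2 ≤ x) : Commute (L.map f).prod (f x) :=
  Commute.list_prod_left _ _ fun _ hy ↦ by
    obtain ⟨i, hi, rfl⟩ := List.mem_map.1 hy
    exact hf i x (hL i hi)

theorem commute_blockProd (hf : ∀ i j, i + 2 ≤ j → Commute (f i) (f j)) {a : ℕ → ℕ}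
    {k x : ℕ} (ha : ∀ j < k, a (j + 1) ≤ a j) (hx : a 0 < x) :
    Commute (blockProd f a k) (f x) := by
  induction k generalizing a with
  | zero => exact Commute.one_left _
  | succ k ih =>
    rw [blockProd_succ]
    refine Commute.mul_left (commute_prod_map_of_add_two_le hf fun i hi ↦ ?_)
      (ih (fun j hj ↦ ha (j + 1) (by omega)) ((ha 0 k.succ_pos).trans_lt hx))
    have := (List.Ico.mem.1 hi).2
    omega

theorem blockProd_mul_eq_blockProd_update (hf : ∀ i j, i + 2 ≤ j → Commute (f i) (f j))
    {n k : ℕ} {a : ℕ → ℕ} (h : IsBlockSeq n a k) (hn : 1 ≤ n) :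
    blockProd f a k * f (n + 1) = blockProd f (Function.update a 0 (n + 2)) k := by
  obtain ⟨k, rfl⟩ := Nat.exists_eq_add_of_le' (h.one_le_length hn)
  have ha1 : a 1 < n + 1 := h.zero ▸ h.strictAnti 0 k.succ_pos
  have hcomm : Commute (blockProd f (fun j ↦ a (j + 1)) k) (f (n + 1)) :=
    commute_blockProd hf (fun j hj ↦ (h.strictAnti (j + 1) (by omega)).le) ha1
  rw [blockProd_succ, blockProd_succ, Function.update_self]
  simp only [ne_eq, Nat.add_one_ne_zero, not_false_eq_true, Function.update_of_ne]
  rw [List.Ico.succ_top ha1.le, List.map_append, List.prod_append, List.map_singleton,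
    List.prod_singleton, h.zero, mul_assoc, hcomm.eq, ← mul_assoc]

theorem mul_blockProd_eq_blockProd_cons {n k : ℕ} {a : ℕ → ℕ} (h : IsBlockSeq n a k) :
    f (n + 1) * blockProd f a k = blockProd f (fun | 0 => n + 2 | j + 1 => a j) (k + 1) := by
  rw [blockProd_succ]
  change _ = ((List.Ico (a 0) (n + 2)).map f).prod * blockProd f a k
  rw [h.zero, List.Ico.succ_singleton, List.map_singleton, List.prod_singleton]

theorem exists_isBlockSeq_blockProd_eq (hf : ∀ i j, i + 2 ≤ j → Commute (f i) (f j))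
    {n : ℕ} (hn : 1 ≤ n) {L : List ℕ} (hL : L.Perm (List.Ico 1 (n + 1))) :
    ∃ k a, IsBlockSeq n a k ∧ (L.map f).prod = blockProd f a k := by
  induction n, hn using Nat.le_induction generalizing L with
  | base =>
    rw [List.Ico.succ_singleton, List.perm_singleton] at hL
    refine ⟨1, fun | 0 => 2 | _ => 1, ⟨rfl, rfl, by simp⟩, ?_⟩
    simp [hL, blockProd, List.Ico.succ_singleton]
  | succ n hn ih =>
    rw [List.Ico.succ_top (by omega)] at hL
    obtain ⟨P, Q, rfl, hPQ⟩ := (hL.trans (List.perm_append_singleton _ _)).exists_eq_append_cons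
    obtain ⟨k, a, ha, hprod⟩ := ih hPQ
    have hnd := hPQ.nodup_iff.2 (List.Ico.nodup 1 (n + 1))
    have hfar : ∀ i ∈ P ++ Q, i ≠ n → i + 2 ≤ n + 1 := fun i hi hin ↦ by
      have := List.Ico.mem.1 (hPQ.subset hi)
      omega
    have hn_mem : n ∈ P ++ Q := hPQ.mem_iff.2 (List.Ico.mem.2 ⟨hn, n.lt_succ_self⟩)
    rcases List.mem_append.1 hn_mem with hnP | hnQ
    · have hQ : Commute (Q.map f).prod (f (n + 1)) :=
        commute_prod_map_of_add_two_le hf fun i hi ↦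
          hfar i (List.mem_append_right _ hi) fun hin ↦
            List.disjoint_of_nodup_append hnd hnP (hin ▸ hi)
      refine ⟨k, _, ha.update hn, ?_⟩
      rw [← blockProd_mul_eq_blockProd_update hf ha hn, ← hprod]
      simp only [List.map_append, List.map_cons, List.prod_append, List.prod_cons, hQ.eq,
        mul_assoc]
    · have hP : Commute (P.map f).prod (f (n + 1)) :=
        commute_prod_map_of_add_two_le hf fun i hi ↦
          hfar i (List.mem_append_left _ hi) fun hin ↦
            List.disjoint_of_nodup_append hnd (hin ▸ hi) hnQ
      refine ⟨k + 1, _, ha.cons, ?_⟩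
      rw [← mul_blockProd_eq_blockProd_cons ha, ← hprod]
      simp only [List.map_append, List.map_cons, List.prod_append, List.prod_cons, ← mul_assoc,
        hP.eq]

end BlockProd

theorem Equiv.Perm.ofFn_succ_perm_Ico {n : ℕ} (τ : Equiv.Perm (Fin n)) :
    (List.ofFn fun k => (τ k : ℕ) + 1).Perm (List.Ico 1 (n + 1)) := by
  have h : List.ofFn (fun k : Fin n => (k : ℕ) + 1) = List.Ico 1 (n + 1) := by
    apply List.ext_getElem <;> simp [List.Ico]
    omega
  exact h ▸ τ.ofFn_comp_perm (fun k : Fin n => (k : ℕ) + 1)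

theorem CoxeterMatrix.B_apply_of_add_two_le {n : ℕ} {i j : Fin n} (h : (i : ℕ) + 2 ≤ j) :
    CoxeterMatrix.B n i j = 2 := by
  simp only [CoxeterMatrix.B, Matrix.of_apply, Fin.ext_iff]
  split_ifs <;> omega

theorem CoxeterSystem.commute_simple_of_eq_two {B : Type*} {M : CoxeterMatrix B}
    (cs : CoxeterSystem M W) {i j : B} (h : M i j = 2) : Commute (cs.simple i) (cs.simple j) := by
  have h2 := cs.simple_mul_simple_pow i j
  rw [h, sq] at h2
  simpa [Commute, SemiconjBy, mul_eq_one_iff_eq_inv] using h2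

theorem commute_sN_of_add_two_le {n : ℕ} (cs : CoxeterSystem (CoxeterMatrix.B n) W) {i j : ℕ}
    (h : i + 2 ≤ j) : Commute (sN cs i) (sN cs j) := by
  unfold sN
  split_ifs with hi hj
  · exact cs.commute_simple_of_eq_two (CoxeterMatrix.B_apply_of_add_two_le (by simp; omega))
  all_goals simp

theorem intv_eq_prod_Ico {n : ℕ} (cs : CoxeterSystem (CoxeterMatrix.B n) W) {a b : ℕ}
    (h : 1 ≤ b) : intv cs a (b - 1) = ((List.Ico a b).map (sN cs)).prod := by
  unfold intv
  rw [List.Ico, Nat.sub_add_cancel h]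

theorem wordProd_ofFn_eq_prod_map_sN {n : ℕ} (cs : CoxeterSystem (CoxeterMatrix.B n) W)
    (τ : Equiv.Perm (Fin n)) :
    cs.wordProd (List.ofFn fun k => τ k) =
      ((List.ofFn fun k => (τ k : ℕ) + 1).map (sN cs)).prod := by
  rw [CoxeterSystem.wordProd, List.map_ofFn, List.map_ofFn]
  congr 2
  funext k
  have hk : 1 ≤ (τ k : ℕ) + 1 ∧ (τ k : ℕ) + 1 ≤ n := by omega
  simp only [Function.comp_apply, sN, dif_pos hk]
  rfl

/-- Every Coxeter element `c` of the Coxeter group `W` of type `Cₙ` (`n ≥ 3`) can be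
written as `c = ∏_{j=1}^{k} [a_j, a_{j-1} - 1]` (factors in increasing `j` from left to
right) for some integer `k ≥ 1` and a decreasing sequence `n ≥ a_1 > a_2 > ⋯ > a_k = 1`,
where `a_0 := n + 1` (so the first factor is `[a_1, n]`). -/
theorem coxeter_element_normal_form (n : ℕ) (hn : 3 ≤ n)
    (cs : CoxeterSystem (CoxeterMatrix.Bₙ n) W) (c : W) (hc : IsCoxeterElement cs c) :
    ∃ (k : ℕ) (a : ℕ → ℕ), 1 ≤ k ∧ a 0 = n + 1 ∧ a k = 1 ∧ a 1 ≤ n ∧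
      (∀ j, 1 ≤ j → j < k → a (j + 1) < a j) ∧
      c = ((List.range' 1 k).map fun j => intv cs (a j) (a (j - 1) - 1)).prod := by
  obtain ⟨τ, rfl⟩ := hc
  obtain ⟨k, a, ha, hprod⟩ := exists_isBlockSeq_blockProd_eq
    (fun _ _ ↦ commute_sN_of_add_two_le cs) (by omega) τ.ofFn_succ_perm_Ico
  have hk := ha.one_le_length (by omega)
  refine ⟨k, a, hk, ha.zero, ha.last, ?_, fun j _ hj ↦ ha.strictAnti j hj, ?_⟩
  · simpa [ha.zero, Nat.lt_succ_iff] using ha.strictAnti 0 hk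
  · refine (wordProd_ofFn_eq_prod_map_sN cs τ).trans (hprod.trans ?_)
    refine congrArg _ (List.map_congr_left fun j hj ↦ (intv_eq_prod_Ico cs ?_).symm)
    have := ha.strictAnti (j - 1) (by have := List.mem_range'_1.1 hj; omega)
    omega
end

section
/- Let c = s_1 · s_2 ⋯ s_n be the Coxeter element of the Weyl group of type Cₙ acting on ℝⁿ (product with the rightmost factor applied first). Then for every 1 ≤ r ≤ n and every j with n + 1 − r ≤ j ≤ n, the vector cʳ(α_j) is a negative root. -/
/-!
Type `Cₙ` Weyl group in its reflection representation on `ℝⁿ` (simple reflections `s_1, …, s_n`,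
1-indexed: `s_i` swaps coordinates `i`, `i+1` for `i < n` and `s_n` negates the last coordinate).
Simple roots: `α_i = e_i - e_{i+1}` (`1 ≤ i ≤ n-1`), `α_n = 2eₙ`.  Positive roots:
`e_i ± e_j` (`i < j`) and `2e_i`; a root is negative if its negative is positive.

STATEMENT: for `c = s_1 s_2 ⋯ s_n` (rightmost applied first), every `1 ≤ r ≤ n` and every
`n + 1 - r ≤ j ≤ n`, the vector `cʳ(α_j)` is a negative root.
-/

noncomputable section

/-- The standard basis vector `e_i` of `ℝⁿ` (`i : Fin n`, 0-indexed). -/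
def eVec (n : ℕ) (i : Fin n) : Fin n → ℝ := Pi.single i 1

/-- The positive roots of type `Cₙ`: `e_i - e_j`, `e_i + e_j` (`i < j`) and `2e_i`. -/
def IsPosRoot (n : ℕ) (v : Fin n → ℝ) : Prop :=
  (∃ i j : Fin n, i < j ∧ (v = eVec n i - eVec n j ∨ v = eVec n i + eVec n j)) ∨
    ∃ i : Fin n, v = (2 : ℝ) • eVec n i

/-- A vector is a negative root iff its negative is a positive root. -/
def IsNegRoot (n : ℕ) (v : Fin n → ℝ) : Prop := IsPosRoot n (-v)

/-- The simple root `α_j` (1-indexed, `1 ≤ j ≤ n`): `α_j = e_j - e_{j+1}` for `j < n`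
and `α_n = 2eₙ`; junk value `0` out of range. -/
def alphaC (n : ℕ) (j : ℕ) : Fin n → ℝ :=
  if h : 1 ≤ j ∧ j < n then eVec n ⟨j - 1, by omega⟩ - eVec n ⟨j, h.2⟩
  else if h2 : j = n ∧ 0 < n then (2 : ℝ) • eVec n ⟨n - 1, by omega⟩
  else 0

/-!
The Coxeter element acts on the standard basis as the signed cyclic shift
`e_1 ↦ e_2 ↦ ⋯ ↦ e_n ↦ -e_1`: the prefix `s_1 ⋯ s_{n-1}` permutes the coordinates by the
cycle `(1 2 ⋯ n)` and `s_n` contributes the sign.  Hence `cʳ e_i = e_{i+r}` if `i + r ≤ n` and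
`cʳ e_i = -e_{i+r-n}` if `n < i + r ≤ 2n`.  For `j ≥ n + 1 - r` both basis vectors occurring in
`α_j` wrap around, so `cʳ α_j` is `-(e_a - e_{a+1})` or `-2e_r`.
-/

abbrev coxeterC (n : ℕ) : (Fin n → ℝ) ≃ₗ[ℝ] (Fin n → ℝ) :=
  ((List.range' 1 n).map (sC n)).prod

lemma sC_succ_apply_eVec {n i : ℕ} (hi : i + 1 < n) (k : Fin n) :
    sC n (i + 1) (eVec n k) = eVec n (Equiv.swap ⟨i, by omega⟩ ⟨i + 1, hi⟩ k) := by
  ext j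
  simp [sC, hi, eVec, Pi.single_apply, ← Equiv.eq_symm_apply]

lemma sC_self_apply_eVec_of_add_one_eq {n : ℕ} {i : Fin n} (hi : (i : ℕ) + 1 = n) :
    sC n n (eVec n i) = -eVec n i := by
  obtain ⟨i, hin⟩ := i
  obtain rfl : i = n - 1 := by simp only at hi; omega
  ext j
  by_cases hj : j = ⟨n - 1, hin⟩ <;> simp [sC, show 0 < n by omega, negLin, eVec, hj]

lemma sC_self_apply_eVec_of_add_one_lt {n : ℕ} {i : Fin n} (hi : (i : ℕ) + 1 < n) :
    sC n n (eVec n i) = eVec n i := by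
  have hne : i ≠ ⟨n - 1, by omega⟩ := Fin.ne_of_val_ne (by dsimp only; omega)
  ext j
  by_cases hj : j = ⟨n - 1, by omega⟩ <;>
    simp [sC, show 0 < n by omega, negLin, eVec, Pi.single_apply, hj, hne]

lemma Fin.coe_cycleRange {n : ℕ} (i j : Fin n) :
    (Fin.cycleRange i j : ℕ) =
      if j < i then (j : ℕ) + 1 else if j = i then 0 else (j : ℕ) := by
  rcases lt_or_ge i j with h | h
  · rw [Fin.cycleRange_of_gt h, if_neg (by omega), if_neg (by omega)]
  · rw [Fin.coe_cycleRange_of_le h]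
    split_ifs <;> simp_all [Fin.ext_iff] <;> omega

lemma Fin.cycleRange_succ_eq_mul_swap {n m : ℕ} (hm : m + 1 < n) :
    Fin.cycleRange (⟨m + 1, hm⟩ : Fin n) =
      Fin.cycleRange ⟨m, by omega⟩ * Equiv.swap ⟨m, by omega⟩ ⟨m + 1, hm⟩ := by
  ext x
  simp only [Equiv.Perm.mul_apply, Equiv.swap_apply_def, Fin.coe_cycleRange]
  split_ifs <;> simp_all [Fin.ext_iff, Fin.lt_def] <;> omega

lemma prod_map_sC_range'_apply_eVec {n m : ℕ} (hm : m < n) (k : Fin n) :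
    ((List.range' 1 m).map (sC n)).prod (eVec n k) = eVec n (Fin.cycleRange ⟨m, hm⟩ k) := by
  induction m generalizing k with
  | zero => simp [Fin.cycleRange_mk_zero]
  | succ m ih =>
    rw [List.range'_concat, List.map_append, List.prod_append, List.map_singleton,
      List.prod_singleton, LinearEquiv.mul_apply, Nat.one_mul, Nat.add_comm 1 m,
      sC_succ_apply_eVec hm, ih (by omega), Fin.cycleRange_succ_eq_mul_swap hm,
      Equiv.Perm.mul_apply]

lemma coxeterC_apply {n : ℕ} (hn : 0 < n) (v : Fin n → ℝ) :
    coxeterC n v = ((List.range' 1 (n - 1)).map (sC n)).prod (sC n n v) := by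
  obtain ⟨m, rfl⟩ : ∃ m, n = m + 1 := ⟨n - 1, by omega⟩
  rw [coxeterC, List.range'_concat, List.map_append, List.prod_append, List.map_singleton,
    List.prod_singleton, LinearEquiv.mul_apply, Nat.one_mul, Nat.add_comm 1 m,
    Nat.add_sub_cancel]

lemma coxeterC_apply_eVec_shift {n : ℕ} {i j : Fin n} (h : (i : ℕ) + 1 = j) :
    coxeterC n (eVec n i) = eVec n j := by
  rw [coxeterC_apply (by omega), sC_self_apply_eVec_of_add_one_lt (by omega),
    prod_map_sC_range'_apply_eVec (by omega)]
  exact congrArg (eVec n) (Fin.ext (by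
    rw [Fin.coe_cycleRange, if_pos (by simp only [Fin.lt_def]; omega)]; omega))

lemma coxeterC_apply_eVec_wrap {n : ℕ} {i j : Fin n} (h : (i : ℕ) + 1 = j + n) :
    coxeterC n (eVec n i) = -eVec n j := by
  rw [coxeterC_apply (by omega), sC_self_apply_eVec_of_add_one_eq (by omega), map_neg,
    prod_map_sC_range'_apply_eVec (by omega)]
  exact congrArg (-eVec n ·) (Fin.ext (by
    rw [Fin.coe_cycleRange, if_neg (by simp only [Fin.lt_def]; omega),
      if_pos (Fin.ext (by dsimp only; omega))]; omega))

lemma coxeterC_pow_apply_eVec_shift {n r : ℕ} {i j : Fin n} (h : (i : ℕ) + r = j) :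
    (coxeterC n ^ r) (eVec n i) = eVec n j := by
  induction r generalizing j with
  | zero => exact congrArg (eVec n) (Fin.ext h)
  | succ r ih =>
    rw [pow_succ', LinearEquiv.mul_apply, ih (j := ⟨i + r, by omega⟩) rfl,
      coxeterC_apply_eVec_shift (by dsimp only; omega)]

lemma coxeterC_pow_apply_eVec_wrap {n r : ℕ} {i j : Fin n} (h : (i : ℕ) + r = j + n) :
    (coxeterC n ^ r) (eVec n i) = -eVec n j := by
  obtain rfl : r = j + 1 + (n - 1 - i) := by omega
  rw [pow_add, pow_succ, LinearEquiv.mul_apply, LinearEquiv.mul_apply,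
    coxeterC_pow_apply_eVec_shift (j := ⟨n - 1, by omega⟩) (by dsimp only; omega),
    coxeterC_apply_eVec_wrap (j := ⟨0, by omega⟩) (by dsimp only; omega), map_neg]
  exact congrArg Neg.neg (coxeterC_pow_apply_eVec_shift (by simp))

theorem coxeter_pow_simple_root_neg_general (n : ℕ) (r j : ℕ)
    (hrn : r ≤ n) (hj1 : n + 1 - r ≤ j) (hjn : j ≤ n) :
    IsNegRoot n
      ((((List.range' 1 n).map (sC n)).prod ^ r) (alphaC n j)) := by
  change IsNegRoot n ((coxeterC n ^ r) (alphaC n j))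
  rcases hjn.lt_or_eq with hjlt | rfl
  · rw [alphaC, dif_pos ⟨by omega, hjlt⟩, map_sub,
      coxeterC_pow_apply_eVec_wrap (j := ⟨j - 1 + r - n, by omega⟩) (by dsimp only; omega),
      coxeterC_pow_apply_eVec_wrap (j := ⟨j + r - n, by omega⟩) (by dsimp only; omega)]
    exact Or.inl ⟨⟨j - 1 + r - n, by omega⟩, ⟨j + r - n, by omega⟩,
      Fin.mk_lt_mk.2 (by omega), Or.inl (by abel)⟩
  · rw [alphaC, dif_neg (by omega), dif_pos ⟨rfl, by omega⟩, map_smul,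
      coxeterC_pow_apply_eVec_wrap (j := ⟨r - 1, by omega⟩) (by dsimp only; omega)]
    exact Or.inr ⟨_, by rw [smul_neg, neg_neg]⟩

/-- Let `c = s_1 s_2 ⋯ s_n` (the rightmost factor applied first) be the Coxeter element of
the Weyl group of type `Cₙ` (`n ≥ 3`) acting on `ℝⁿ`.  Then for every `1 ≤ r ≤ n` and every
`j` with `n + 1 - r ≤ j ≤ n`, the vector `cʳ(α_j)` is a negative root. -/
theorem coxeter_pow_simple_root_neg (n : ℕ) (hn : 3 ≤ n) (r j : ℕ)
    (hr1 : 1 ≤ r) (hrn : r ≤ n) (hj1 : n + 1 - r ≤ j) (hjn : j ≤ n) :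
    IsNegRoot n
      ((((List.range' 1 n).map (sC n)).prod ^ r) (alphaC n j)) :=
  coxeter_pow_simple_root_neg_general n r j hrn hj1 hjn

end
end
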